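/- arXiv:2111.10950 — 4 statements merged into one kernel-verified Lean document; each statement's English description precedes it below -/
import Mathlib

section
/- Let α be a finite positive measure on [0,1). Then sup_{θ ∈ [0,2π)} |∫₀¹ sin θ / ((r − cos θ)² + sin²θ) α(dr)| < ∞ holds if and only if sup_{0<δ<1} α([1−δ,1))/δ < ∞. -/
/-!
The integrand is the Poisson kernel `P_w(r) = Im w / |r - w|²` of the upper half-plane at
`w = e^{iθ}`. If its integrals are bounded by `B`, take `θ = arcsin δ`: then `P_w ≥ 1 / (2δ)` on
`[1 - δ, 1)`, so `α [1 - δ, 1) ≤ 2Bδ`. Conversely, for `r ≥ 0` we have `|r - e^{iθ}| ≥ 1 - r`,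
so `|P_w| ≤ 2P` with `P` the kernel at `1 + i |sin θ|`. Integrating by parts against the tail
`u ↦ α [u, 1) ≤ C (1 - u)` and using `(1 - u) P' ≤ 2P` gives
`∫ P dα ≤ P(0) α(ℝ) + 2C ∫₀¹ P ≤ α(ℝ) + π C`.
-/

open MeasureTheory Set Real

theorem integral_intervalIntegral_eq_integral_measureReal_Ici_mul {μ : Measure ℝ}
    [IsFiniteMeasure μ] {a b : ℝ} (hab : a ≤ b) (hμ : ∀ᵐ r ∂μ, r ∈ Icc a b) {g : ℝ → ℝ}
    (hg : IntervalIntegrable g volume a b) :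
    ∫ r, (∫ u in a..r, g u) ∂μ = ∫ u in a..b, μ.real (Ici u) * g u := by
  set ν := volume.restrict (Ioc a b)
  have hprimitive : ∀ᵐ r ∂μ, ∫ u in a..r, g u = ∫ u, (Iic r).indicator g u ∂ν := by
    filter_upwards [hμ] with r hr
    rw [intervalIntegral.integral_of_le hr.1, integral_indicator measurableSet_Iic,
      Measure.restrict_restrict measurableSet_Iic, inter_comm, Ioc_inter_Iic,
      min_eq_right hr.2]
  have hint : Integrable (Function.uncurry fun r u ↦ (Iic r).indicator g u) (μ.prod ν) :=
    (hg.1.integrable.comp_snd μ).indicator (measurableSet_le measurable_snd measurable_fst)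
  rw [integral_congr_ae hprimitive, integral_integral_swap hint,
    intervalIntegral.integral_of_le hab]
  congr 1 with u
  have : (fun r ↦ (Iic r).indicator g u) = (Ici u).indicator fun _ ↦ g u := by
    ext r; by_cases h : u ≤ r <;> simp [h]
  rw [this, integral_indicator_const _ measurableSet_Ici, smul_eq_mul]

theorem integral_eq_mul_measureReal_univ_add_integral_measureReal_Ici_mul {μ : Measure ℝ}
    [IsFiniteMeasure μ] {a b : ℝ} (hab : a ≤ b) (hμ : ∀ᵐ r ∂μ, r ∈ Icc a b) {G g : ℝ → ℝ}
    (hG : ∀ x ∈ Icc a b, HasDerivAt G (g x) x) (hg : IntervalIntegrable g volume a b) :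
    ∫ r, G r ∂μ = G a * μ.real univ + ∫ u in a..b, μ.real (Ici u) * g u := by
  have hGint : Integrable G μ := by
    rw [← Measure.restrict_eq_self_of_ae_mem hμ]
    exact ContinuousOn.integrableOn_compact isCompact_Icc
      fun x hx ↦ (hG x hx).continuousAt.continuousWithinAt
  have hftc : ∀ᵐ r ∂μ, G r - G a = ∫ u in a..r, g u := by
    filter_upwards [hμ] with r hr
    have hsub : uIcc a r ⊆ Icc a b := by rw [uIcc_of_le hr.1]; exact Icc_subset_Icc_right hr.2
    exact (intervalIntegral.integral_eq_sub_of_hasDerivAt (fun x hx ↦ hG x (hsub hx))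
      (hg.mono_set (by rwa [uIcc_of_le hab]))).symm
  rw [← integral_intervalIntegral_eq_integral_measureReal_Ici_mul hab hμ hg,
    ← integral_congr_ae hftc, integral_sub hGint (integrable_const _), integral_const,
    smul_eq_mul, mul_comm]
  ring

/-- The integrand of the theorem is `halfPlanePoissonKernel (cos θ) (sin θ) r`. -/
noncomputable def halfPlanePoissonKernel (a s x : ℝ) : ℝ := s / ((x - a) ^ 2 + s ^ 2)

section halfPlanePoissonKernel

variable {a s : ℝ}

theorem halfPlanePoissonKernel_nonneg (hs : 0 ≤ s) (x : ℝ) :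
    0 ≤ halfPlanePoissonKernel a s x := by
  unfold halfPlanePoissonKernel; positivity

theorem abs_halfPlanePoissonKernel (a s x : ℝ) :
    |halfPlanePoissonKernel a s x| = halfPlanePoissonKernel a |s| x := by
  unfold halfPlanePoissonKernel
  rw [abs_div, sq_abs, abs_of_nonneg (by positivity : 0 ≤ (x - a) ^ 2 + s ^ 2)]

theorem halfPlanePoissonKernel_le_inv (hs : 0 ≤ s) (x : ℝ) :
    halfPlanePoissonKernel a s x ≤ s⁻¹ := by
  unfold halfPlanePoissonKernel
  rcases hs.eq_or_lt with rfl | hs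
  · simp
  rw [div_le_iff₀ (by positivity), ← div_eq_inv_mul, le_div_iff₀ hs]
  nlinarith [sq_nonneg (x - a)]

theorem halfPlanePoissonKernel_one_zero_le_one (s : ℝ) : halfPlanePoissonKernel 1 s 0 ≤ 1 := by
  unfold halfPlanePoissonKernel
  rw [div_le_one (by positivity)]
  nlinarith [sq_nonneg (s - 1)]

theorem inv_two_mul_le_halfPlanePoissonKernel (hs : 0 < s) {x : ℝ} (hx : |x - a| ≤ s) :
    (2 * s)⁻¹ ≤ halfPlanePoissonKernel a s x := by
  unfold halfPlanePoissonKernel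
  rw [← one_div, div_le_div_iff₀ (by positivity) (by positivity)]
  nlinarith [sq_abs (x - a), abs_nonneg (x - a)]

theorem integrable_halfPlanePoissonKernel (a s : ℝ) (μ : Measure ℝ) [IsFiniteMeasure μ] :
    Integrable (halfPlanePoissonKernel a s) μ :=
  (integrable_const |s|⁻¹).mono'
    (by unfold halfPlanePoissonKernel; fun_prop :
      Measurable (halfPlanePoissonKernel a s)).aestronglyMeasurable
    (.of_forall fun x ↦ by
      rw [Real.norm_eq_abs, abs_halfPlanePoissonKernel]
      exact halfPlanePoissonKernel_le_inv (abs_nonneg s) x)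

theorem continuous_halfPlanePoissonKernel (hs : s ≠ 0) : Continuous (halfPlanePoissonKernel a s) :=
  continuous_const.div (by fun_prop) fun x ↦ by positivity

theorem hasDerivAt_halfPlanePoissonKernel (hs : s ≠ 0) (x : ℝ) :
    HasDerivAt (halfPlanePoissonKernel a s) (2 * s * (a - x) / ((x - a) ^ 2 + s ^ 2) ^ 2) x := by
  have hD : (x - a) ^ 2 + s ^ 2 ≠ 0 := by positivity
  refine ((hasDerivAt_const x s).div
    ((((hasDerivAt_id x).sub_const a).pow 2).add_const (s ^ 2)) hD).congr_deriv ?_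
  simp only [id_eq, Pi.pow_apply, zero_mul, Nat.cast_ofNat, Nat.add_one_sub_one, pow_one, mul_one,
    zero_sub]
  ring

theorem hasDerivAt_arctan_sub_div (hs : s ≠ 0) (x : ℝ) :
    HasDerivAt (fun x ↦ arctan ((x - a) / s)) (halfPlanePoissonKernel a s x) x := by
  refine (((hasDerivAt_id x).sub_const a).div_const s).arctan.congr_deriv ?_
  unfold halfPlanePoissonKernel
  field_simp
  simp only [id]
  ring

theorem intervalIntegral_halfPlanePoissonKernel_one_le (hs : 0 < s) :
    ∫ x in (0 : ℝ)..1, halfPlanePoissonKernel 1 s x ≤ π / 2 := by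
  rw [intervalIntegral.integral_eq_sub_of_hasDerivAt
    (fun x _ ↦ hasDerivAt_arctan_sub_div hs.ne' x)
    ((continuous_halfPlanePoissonKernel hs.ne').intervalIntegrable _ _)]
  simp only [sub_self, zero_div, arctan_zero, zero_sub, neg_div, arctan_neg, neg_neg]
  exact (arctan_lt_pi_div_two _).le

theorem halfPlanePoissonKernel_cos_le_two_mul_halfPlanePoissonKernel_one (θ : ℝ) {r : ℝ}
    (hr : 0 ≤ r) :
    halfPlanePoissonKernel (cos θ) |sin θ| r ≤ 2 * halfPlanePoissonKernel 1 |sin θ| r := by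
  unfold halfPlanePoissonKernel
  rcases (abs_nonneg (sin θ)).eq_or_lt with hs | hs
  · simp [← hs]
  rw [mul_div_assoc', div_le_div_iff₀ (by positivity) (by positivity), sq_abs]
  have hdist : (r - 1) ^ 2 ≤ (r - cos θ) ^ 2 + sin θ ^ 2 := by
    nlinarith [sin_sq_add_cos_sq θ, cos_le_one θ]
  nlinarith [mul_le_mul_of_nonneg_left hdist hs.le, sq_nonneg (sin θ)]

theorem halfPlanePoissonKernel_one_deriv_mul_one_sub_le (hs : 0 ≤ s) (x : ℝ) :
    2 * s * (1 - x) / ((x - 1) ^ 2 + s ^ 2) ^ 2 * (1 - x) ≤ 2 * halfPlanePoissonKernel 1 s x := by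
  unfold halfPlanePoissonKernel
  rcases hs.eq_or_lt with rfl | hs
  · simp
  rw [div_mul_eq_mul_div, mul_div_assoc', div_le_div_iff₀ (by positivity) (by positivity)]
  have hD : (1 - x) ^ 2 ≤ (x - 1) ^ 2 + s ^ 2 := by nlinarith [sq_nonneg s]
  have := mul_le_mul_of_nonneg_left hD (by positivity : 0 ≤ 2 * s * ((x - 1) ^ 2 + s ^ 2))
  nlinarith

end halfPlanePoissonKernel

section measure

variable {α : Measure ℝ} {C : ℝ}

theorem measureReal_Ici_le_of_measureReal_Ico_le (hα : α (Ico 0 1)ᶜ = 0)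
    (hC : ∀ δ ∈ Ioo (0 : ℝ) 1, α.real (Ico (1 - δ) 1) ≤ C * δ) {u : ℝ} (hu : u ∈ Ioo 0 1) :
    α.real (Ici u) ≤ C * (1 - u) := by
  have hIco : Ici u ∩ Ico 0 1 = Ico (1 - (1 - u)) 1 := by
    ext r
    simp only [sub_sub_cancel, mem_inter_iff, mem_Ici, mem_Ico]
    constructor
    · rintro ⟨hur, -, hr1⟩; exact ⟨hur, hr1⟩
    · rintro ⟨hur, hr1⟩; exact ⟨hur, hu.1.le.trans hur, hr1⟩
  rw [measureReal_def, ← measure_inter_conull hα, hIco]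
  exact hC (1 - u) ⟨by linarith [hu.2], by linarith [hu.1]⟩

theorem nonneg_of_measureReal_Ico_le
    (hC : ∀ δ ∈ Ioo (0 : ℝ) 1, α.real (Ico (1 - δ) 1) ≤ C * δ) : 0 ≤ C := by
  have := hC (1 / 2) ⟨by norm_num, by norm_num⟩
  nlinarith [measureReal_nonneg (μ := α) (s := Ico (1 - 1 / 2) 1)]

theorem intervalIntegral_measureReal_Ici_mul_deriv_le [IsFiniteMeasure α] (hα : α (Ico 0 1)ᶜ = 0)
    (hC : ∀ δ ∈ Ioo (0 : ℝ) 1, α.real (Ico (1 - δ) 1) ≤ C * δ) {s : ℝ} (hs : 0 < s) :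
    ∫ u in (0 : ℝ)..1, α.real (Ici u) * (2 * s * (1 - u) / ((u - 1) ^ 2 + s ^ 2) ^ 2) ≤
      π * C := by
  have hC0 := nonneg_of_measureReal_Ico_le hC
  have hanti : Antitone fun u ↦ α.real (Ici u) :=
    fun u v huv ↦ measureReal_mono (Ici_subset_Ici.2 huv)
  have hcompare : ∀ u ∈ Ioo (0 : ℝ) 1,
      α.real (Ici u) * (2 * s * (1 - u) / ((u - 1) ^ 2 + s ^ 2) ^ 2) ≤
        C * (2 * halfPlanePoissonKernel 1 s u) := fun u hu ↦
    calc _ ≤ C * (1 - u) * (2 * s * (1 - u) / ((u - 1) ^ 2 + s ^ 2) ^ 2) :=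
          mul_le_mul_of_nonneg_right (measureReal_Ici_le_of_measureReal_Ico_le hα hC hu)
            (div_nonneg (mul_nonneg (by positivity) (sub_nonneg.2 hu.2.le)) (by positivity))
      _ = C * (2 * s * (1 - u) / ((u - 1) ^ 2 + s ^ 2) ^ 2 * (1 - u)) := by ring
      _ ≤ C * (2 * halfPlanePoissonKernel 1 s u) :=
          mul_le_mul_of_nonneg_left (halfPlanePoissonKernel_one_deriv_mul_one_sub_le hs.le u) hC0
  calc _ ≤ ∫ u in (0 : ℝ)..1, C * (2 * halfPlanePoissonKernel 1 s u) :=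
        intervalIntegral.integral_mono_on_of_le_Ioo zero_le_one
          (hanti.intervalIntegrable.mul_continuousOn
            (Continuous.div (by fun_prop) (by fun_prop) fun x ↦ by positivity).continuousOn)
          (((continuous_halfPlanePoissonKernel hs.ne').intervalIntegrable _ _).const_mul 2
            |>.const_mul C) hcompare
    _ = 2 * C * ∫ u in (0 : ℝ)..1, halfPlanePoissonKernel 1 s u := by
        rw [intervalIntegral.integral_const_mul, intervalIntegral.integral_const_mul]; ring
    _ ≤ 2 * C * (π / 2) :=
        mul_le_mul_of_nonneg_left (intervalIntegral_halfPlanePoissonKernel_one_le hs)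
          (by positivity)
    _ = π * C := by ring

theorem integral_halfPlanePoissonKernel_one_le [IsFiniteMeasure α] (hα : α (Ico 0 1)ᶜ = 0)
    (hC : ∀ δ ∈ Ioo (0 : ℝ) 1, α.real (Ico (1 - δ) 1) ≤ C * δ) {s : ℝ} (hs : 0 ≤ s) :
    ∫ r, halfPlanePoissonKernel 1 s r ∂α ≤ α.real univ + π * C := by
  rcases hs.eq_or_lt with rfl | hs
  · simp only [halfPlanePoissonKernel, zero_div, integral_zero]
    have := nonneg_of_measureReal_Ico_le hC
    positivity
  have hae : ∀ᵐ r ∂α, r ∈ Icc (0 : ℝ) 1 := (ae_iff.2 hα).mono fun r hr ↦ Ico_subset_Icc_self hr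
  rw [integral_eq_mul_measureReal_univ_add_integral_measureReal_Ici_mul zero_le_one hae
    (fun x _ ↦ hasDerivAt_halfPlanePoissonKernel hs.ne' x)
    ((Continuous.div (by fun_prop) (by fun_prop) fun x ↦ by positivity).intervalIntegrable _ _)]
  have hatom : halfPlanePoissonKernel 1 s 0 * α.real univ ≤ α.real univ :=
    mul_le_of_le_one_left measureReal_nonneg (halfPlanePoissonKernel_one_zero_le_one s)
  linarith [intervalIntegral_measureReal_Ici_mul_deriv_le hα hC hs]

theorem abs_integral_halfPlanePoissonKernel_le [IsFiniteMeasure α] (hα : α (Ico 0 1)ᶜ = 0)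
    (hC : ∀ δ ∈ Ioo (0 : ℝ) 1, α.real (Ico (1 - δ) 1) ≤ C * δ) (θ : ℝ) :
    |∫ r, halfPlanePoissonKernel (cos θ) (sin θ) r ∂α| ≤ 2 * (α.real univ + π * C) :=
  calc |∫ r, halfPlanePoissonKernel (cos θ) (sin θ) r ∂α|
      ≤ ∫ r, halfPlanePoissonKernel (cos θ) |sin θ| r ∂α := by
        simpa only [abs_halfPlanePoissonKernel] using
          abs_integral_le_integral_abs (f := halfPlanePoissonKernel (cos θ) (sin θ)) (μ := α)
    _ ≤ ∫ r, 2 * halfPlanePoissonKernel 1 |sin θ| r ∂α :=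
        integral_mono_ae (integrable_halfPlanePoissonKernel _ _ α)
          ((integrable_halfPlanePoissonKernel _ _ α).const_mul 2)
          ((ae_iff.2 hα).mono fun r hr ↦
            halfPlanePoissonKernel_cos_le_two_mul_halfPlanePoissonKernel_one θ hr.1)
    _ ≤ 2 * (α.real univ + π * C) := by
        rw [integral_const_mul]
        gcongr
        exact integral_halfPlanePoissonKernel_one_le hα hC (abs_nonneg _)

end measure

theorem measureReal_Icc_le_two_mul_integral_halfPlanePoissonKernel (μ : Measure ℝ)
    [IsFiniteMeasure μ] (a : ℝ) {s : ℝ} (hs : 0 < s) :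
    μ.real (Icc (a - s) (a + s)) ≤ 2 * s * ∫ r, halfPlanePoissonKernel a s r ∂μ := by
  have hint := integrable_halfPlanePoissonKernel a s μ
  have hlower : (2 * s)⁻¹ * μ.real (Icc (a - s) (a + s)) ≤
      ∫ r in Icc (a - s) (a + s), halfPlanePoissonKernel a s r ∂μ :=
    setIntegral_ge_of_const_le_real measurableSet_Icc (measure_ne_top μ _)
      (fun r hr ↦ inv_two_mul_le_halfPlanePoissonKernel hs
        (abs_sub_le_iff.2 ⟨by linarith [hr.2], by linarith [hr.1]⟩)) hint.integrableOn
  have hset := setIntegral_le_integral (s := Icc (a - s) (a + s)) hint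
    (.of_forall (halfPlanePoissonKernel_nonneg hs.le))
  calc μ.real (Icc (a - s) (a + s)) = 2 * s * ((2 * s)⁻¹ * μ.real (Icc (a - s) (a + s))) := by
        field_simp
    _ ≤ 2 * s * ∫ r, halfPlanePoissonKernel a s r ∂μ := by
        gcongr; exact hlower.trans hset

theorem one_sub_le_cos_arcsin {δ : ℝ} (h₀ : 0 ≤ δ) (h₁ : δ ≤ 1) : 1 - δ ≤ cos (arcsin δ) := by
  rw [cos_arcsin]
  exact le_sqrt_of_sq_le (by nlinarith)

-- For `θ = arcsin δ` the point `e^{iθ}` lies within `δ` of every point of `[1 - δ, 1)`.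
theorem measureReal_Ico_one_sub_le_two_mul_integral (μ : Measure ℝ) [IsFiniteMeasure μ] {δ : ℝ}
    (hδ : δ ∈ Ioo 0 1) :
    μ.real (Ico (1 - δ) 1) ≤
      2 * δ * ∫ r, halfPlanePoissonKernel (cos (arcsin δ)) (sin (arcsin δ)) r ∂μ := by
  have hsub : Ico (1 - δ) 1 ⊆ Icc (cos (arcsin δ) - δ) (cos (arcsin δ) + δ) :=
    fun r hr ↦ ⟨by linarith [cos_le_one (arcsin δ), hr.1],
      by linarith [one_sub_le_cos_arcsin hδ.1.le hδ.2.le, hr.2.le]⟩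
  rw [sin_arcsin (by linarith [hδ.1]) hδ.2.le]
  exact (measureReal_mono hsub).trans
    (measureReal_Icc_le_two_mul_integral_halfPlanePoissonKernel μ _ hδ.1)

/-- for a finite measure α on [0,1),
`sup_θ |∫₀¹ sinθ/((r-cosθ)²+sin²θ) α(dr)| < ∞` iff `sup_{0<δ<1} α([1-δ,1))/δ < ∞`. -/
theorem stmt2 (α : Measure ℝ) [IsFiniteMeasure α] (hα : α (Set.Ico (0:ℝ) 1)ᶜ = 0) :
    (∃ B : ℝ, ∀ θ ∈ Set.Ico (0:ℝ) (2 * π),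
        |∫ r, Real.sin θ / ((r - Real.cos θ) ^ 2 + Real.sin θ ^ 2) ∂α| ≤ B) ↔
    ∃ B : ℝ, ∀ δ ∈ Set.Ioo (0:ℝ) 1, (α (Set.Ico (1 - δ) 1)).toReal ≤ B * δ := by
  constructor
  · rintro ⟨B, hB⟩
    refine ⟨2 * B, fun δ hδ ↦ ?_⟩
    have hθ : arcsin δ ∈ Ico 0 (2 * π) :=
      ⟨arcsin_nonneg.2 hδ.1.le, (arcsin_le_pi_div_two δ).trans_lt (by linarith [pi_pos])⟩
    calc α.real (Ico (1 - δ) 1)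
        ≤ 2 * δ * ∫ r, halfPlanePoissonKernel (cos (arcsin δ)) (sin (arcsin δ)) r ∂α :=
          measureReal_Ico_one_sub_le_two_mul_integral α hδ
      _ ≤ 2 * δ * B :=
          mul_le_mul_of_nonneg_left ((le_abs_self _).trans (hB _ hθ)) (by linarith [hδ.1])
      _ = 2 * B * δ := by ring
  · rintro ⟨C, hC⟩
    exact ⟨_, fun θ _ ↦ abs_integral_halfPlanePoissonKernel_le hα hC θ⟩
end

section
/- Let ν be a positive measure on ℝ with ∫_ℝ (1+t²)^{-1} ν(dt) < ∞. Then sup_{y>0} ∫_ℝ y/(t²+y²) ν(dt) < ∞ if and only if sup_{L>0} ν([−L,L])/(2L) < ∞. -/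
/-!
Both directions compare the Poisson kernel `y / (t² + y²)` with indicators of the intervals
`[-L, L]`. On `[-y, y]` the kernel is at least `1 / (2y)`, which bounds `ν([-y, y]) / (2y)` by the
Poisson integral at height `y`. Conversely, the kernel is dominated by
`∑ₖ 4 / (4ᵏ y) · 1_{[-2ᵏ y, 2ᵏ y]}`, and integrating against `ν` with `ν([-L, L]) ≤ 2 C L` gives the
geometric series `∑ₖ 8 C 2⁻ᵏ = 16 C`, uniformly in `y`.
-/

open MeasureTheory Set
open scoped ENNReal

lemma mul_measure_le_lintegral_of_le {α : Type*} [MeasurableSpace α] {μ : Measure α} {s : Set α}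
    {f : α → ℝ≥0∞} {c : ℝ≥0∞} (hs : MeasurableSet s) (h : ∀ x ∈ s, c ≤ f x) :
    c * μ s ≤ ∫⁻ x, f x ∂μ := by
  rw [← lintegral_indicator_const hs]
  refine lintegral_mono fun x => ?_
  by_cases hx : x ∈ s
  · simpa [hx] using h x hx
  · simp [hx]

lemma measure_Icc_ne_top_of_lintegral_lt_top {ν : Measure ℝ}
    (hν : ∫⁻ t, ENNReal.ofReal (1 / (1 + t ^ 2)) ∂ν < ⊤) (L : ℝ) :
    ν (Icc (-L) L) ≠ ⊤ := by
  have hle : ENNReal.ofReal (1 / (1 + L ^ 2)) * ν (Icc (-L) L) ≤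
      ∫⁻ t, ENNReal.ofReal (1 / (1 + t ^ 2)) ∂ν := by
    refine mul_measure_le_lintegral_of_le measurableSet_Icc fun t ht => ?_
    have ht2 : t ^ 2 ≤ L ^ 2 := sq_le_sq' ht.1 ht.2
    gcongr
  have hc : ENNReal.ofReal (1 / (1 + L ^ 2)) ≠ 0 := by
    rw [ne_eq, ENNReal.ofReal_eq_zero, not_le]
    positivity
  intro htop
  rw [htop, ENNReal.mul_top hc] at hle
  exact lt_irrefl _ (hle.trans_lt hν)

lemma one_div_two_mul_le_div_sq_add_sq {L t : ℝ} (hL : 0 < L) (ht : t ∈ Icc (-L) L) :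
    1 / (2 * L) ≤ L / (t ^ 2 + L ^ 2) := by
  have ht2 : t ^ 2 ≤ L ^ 2 := sq_le_sq' ht.1 ht.2
  rw [div_le_div_iff₀ (by positivity) (by positivity)]
  nlinarith

lemma measure_Icc_toReal_le_of_lintegral_poisson_le {ν : Measure ℝ} {B : ℝ≥0∞} (hB : B ≠ ⊤)
    (hPB : ∀ y : ℝ, 0 < y → ∫⁻ t, ENNReal.ofReal (y / (t ^ 2 + y ^ 2)) ∂ν ≤ B)
    {L : ℝ} (hL : 0 < L) :
    (ν (Icc (-L) L)).toReal ≤ B.toReal * (2 * L) := by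
  have hle : ENNReal.ofReal (1 / (2 * L)) * ν (Icc (-L) L) ≤ B :=
    (mul_measure_le_lintegral_of_le measurableSet_Icc fun t ht =>
      ENNReal.ofReal_le_ofReal (one_div_two_mul_le_div_sq_add_sq hL ht)).trans (hPB L hL)
  have hle' := ENNReal.toReal_mono hB hle
  rw [ENNReal.toReal_mul, ENNReal.toReal_ofReal (by positivity), one_div,
    inv_mul_le_iff₀ (by positivity)] at hle'
  linarith

lemma exists_abs_le_two_pow_mul_and_div_sq_add_sq_le {y : ℝ} (hy : 0 < y) (t : ℝ) :
    ∃ k : ℕ, |t| ≤ 2 ^ k * y ∧ y / (t ^ 2 + y ^ 2) ≤ 4 / (4 ^ k * y) := by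
  have hex : ∃ k : ℕ, |t| ≤ 2 ^ k * y := by
    obtain ⟨k, hk⟩ := pow_unbounded_of_one_lt (|t| / y) one_lt_two
    exact ⟨k, ((div_lt_iff₀ hy).mp hk).le⟩
  classical
  refine ⟨Nat.find hex, Nat.find_spec hex, ?_⟩
  rw [div_le_div_iff₀ (by positivity) (by positivity)]
  rcases hk : Nat.find hex with _ | m
  · nlinarith [sq_nonneg t]
  · have hlt : 2 ^ m * y < |t| := not_le.mp (Nat.find_min hex (by omega))
    have hsq : (2 ^ m * y) ^ 2 < t ^ 2 := by
      rw [← sq_abs t]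
      exact pow_lt_pow_left₀ hlt (by positivity) two_ne_zero
    have h4 : (4 : ℝ) ^ (m + 1) = 4 * (2 ^ m) ^ 2 := by
      rw [pow_succ, mul_comm, ← pow_mul, mul_comm m 2, pow_mul]
      norm_num
    rw [h4]
    nlinarith

lemma ofReal_div_sq_add_sq_le_tsum_indicator {y : ℝ} (hy : 0 < y) (t : ℝ) :
    ENNReal.ofReal (y / (t ^ 2 + y ^ 2)) ≤
      ∑' k : ℕ, (Icc (-(2 ^ k * y)) (2 ^ k * y)).indicator
        (fun _ => ENNReal.ofReal (4 / (4 ^ k * y))) t := by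
  obtain ⟨k, hkt, hk⟩ := exists_abs_le_two_pow_mul_and_div_sq_add_sq_le hy t
  refine le_trans ?_ (ENNReal.le_tsum k)
  rw [indicator_of_mem (mem_Icc.mpr (abs_le.mp hkt))]
  exact ENNReal.ofReal_le_ofReal hk

lemma lintegral_poisson_le_of_measure_Icc_le {ν : Measure ℝ} {C : ℝ}
    (hC : ∀ L : ℝ, 0 < L → ν (Icc (-L) L) ≤ ENNReal.ofReal (C * (2 * L))) {y : ℝ} (hy : 0 < y) :
    ∫⁻ t, ENNReal.ofReal (y / (t ^ 2 + y ^ 2)) ∂ν ≤ ENNReal.ofReal (16 * C) := by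
  have hterm : ∀ k : ℕ, ENNReal.ofReal (4 / (4 ^ k * y)) * ν (Icc (-(2 ^ k * y)) (2 ^ k * y)) ≤
      ENNReal.ofReal (8 * C) * 2⁻¹ ^ k := fun k => calc
    _ ≤ ENNReal.ofReal (4 / (4 ^ k * y)) * ENNReal.ofReal (C * (2 * (2 ^ k * y))) := by
      gcongr
      exact hC _ (by positivity)
    _ = ENNReal.ofReal (8 * C * (2⁻¹) ^ k) := by
      rw [← ENNReal.ofReal_mul (by positivity)]
      congr 1
      rw [show (4 : ℝ) ^ k = 2 ^ k * 2 ^ k by rw [← mul_pow]; norm_num, inv_pow]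
      field_simp
      ring
    _ = ENNReal.ofReal (8 * C) * 2⁻¹ ^ k := by
      rw [ENNReal.ofReal_mul' (by positivity), ENNReal.ofReal_pow (by norm_num),
        ENNReal.ofReal_inv_of_pos two_pos, ENNReal.ofReal_ofNat]
  calc ∫⁻ t, ENNReal.ofReal (y / (t ^ 2 + y ^ 2)) ∂ν
      ≤ ∫⁻ t, ∑' k : ℕ, (Icc (-(2 ^ k * y)) (2 ^ k * y)).indicator
          (fun _ => ENNReal.ofReal (4 / (4 ^ k * y))) t ∂ν :=
        lintegral_mono (ofReal_div_sq_add_sq_le_tsum_indicator hy)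
    _ = ∑' k : ℕ, ENNReal.ofReal (4 / (4 ^ k * y)) * ν (Icc (-(2 ^ k * y)) (2 ^ k * y)) := by
        rw [lintegral_tsum fun k => (measurable_const.indicator measurableSet_Icc).aemeasurable]
        simp only [lintegral_indicator_const measurableSet_Icc]
    _ ≤ ∑' k : ℕ, ENNReal.ofReal (8 * C) * 2⁻¹ ^ k := ENNReal.tsum_le_tsum hterm
    _ = ENNReal.ofReal (16 * C) := by
        rw [ENNReal.tsum_mul_left, ENNReal.tsum_geometric, ENNReal.one_sub_inv_two, inv_inv,
          show (16 : ℝ) * C = 8 * C * 2 by ring, ENNReal.ofReal_mul' zero_le_two,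
          ENNReal.ofReal_ofNat]

/-- Garnett: for a positive measure ν on ℝ with `∫ (1+t²)⁻¹ dν < ∞`,
`sup_{y>0} ∫ y/(t²+y²) dν < ∞` iff `sup_{L>0} ν([-L,L])/(2L) < ∞`. -/
theorem stmt3 (ν : Measure ℝ)
    (hν : ∫⁻ t, ENNReal.ofReal (1 / (1 + t ^ 2)) ∂ν < ⊤) :
    (∃ B : ℝ≥0∞, B < ⊤ ∧ ∀ y : ℝ, 0 < y →
        ∫⁻ t, ENNReal.ofReal (y / (t ^ 2 + y ^ 2)) ∂ν ≤ B) ↔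
    ∃ B : ℝ, ∀ L : ℝ, 0 < L → (ν (Set.Icc (-L) L)).toReal ≤ B * (2 * L) := by
  constructor
  · rintro ⟨B, hB, hPB⟩
    exact ⟨B.toReal, fun L hL => measure_Icc_toReal_le_of_lintegral_poisson_le hB.ne hPB hL⟩
  · rintro ⟨B, hB⟩
    have hB' : ∀ L : ℝ, 0 < L → ν (Icc (-L) L) ≤ ENNReal.ofReal (B * (2 * L)) := fun L hL =>
      (ENNReal.le_ofReal_iff_toReal_le (measure_Icc_ne_top_of_lintegral_lt_top hν L)
        (ENNReal.toReal_nonneg.trans (hB L hL))).mpr (hB L hL)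
    exact ⟨ENNReal.ofReal (16 * B), ENNReal.ofReal_lt_top,
      fun y hy => lintegral_poisson_le_of_measure_Icc_le hB' hy⟩
end

section
/- Let Π be a positive Radon measure on (0,∞) with Π((0,y]) ≤ Cy for all y > 0. Then for every ε > 0 and x ∈ ℝ, ∫_{(0,ε]} π|x|/(y² + π²x²) Π(dy) ≤ C·arctan(ε/(π|x|)). Consequently, for every φ ∈ L¹(ℝ), lim_{ε→0⁺} ∫_ℝ φ(x) [∫_{(0,ε]} πx/(y²+π²x²) Π(dy)] dx = 0. -/
/-! A measure `μ` on `(0, ∞)` with `μ (0, y] ≤ c y` integrates every nonnegative function that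
decreases on `(0, ∞)` to at most `c` times its Lebesgue integral: by the layer-cake formula it
suffices to compare superlevel sets, and these are intervals `(0, s)` or `(0, s]`. The Poisson
kernel `y ↦ a / (a² + y²)` decreases, and its Lebesgue integral over `(0, ε]` is
`arctan (ε / a)`. This bound tends to `0` with `ε` and stays below `c π / 2`, so dominated
convergence gives the limit. -/

open MeasureTheory Set Filter
open scoped Real ENNReal Topology

section ComparisonWithLebesgue

variable {μ : Measure ℝ} {c : ℝ≥0∞}

lemma measure_le_mul_volume_of_downwardClosed
    (hμ : ∀ y, 0 < y → μ (Ioc 0 y) ≤ c * ENNReal.ofReal y) {S : Set ℝ} {ε : ℝ}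
    (hSε : S ⊆ Ioc 0 ε) (hS : ∀ y ∈ S, ∀ z, 0 < z → z ≤ y → z ∈ S) :
    μ S ≤ c * volume S := by
  rcases S.eq_empty_or_nonempty with rfl | ⟨y, hy⟩
  · simp
  have hbdd : BddAbove S := ⟨ε, fun y hy => (hSε hy).2⟩
  set s := sSup S
  have hs : 0 < s := (hSε hy).1.trans_le (le_csSup hbdd hy)
  have hSs : S ⊆ Ioc 0 s := fun y hy => ⟨(hSε hy).1, le_csSup hbdd hy⟩
  have hsS : Ioo 0 s ⊆ S := fun z hz => by
    obtain ⟨y, hy, hzy⟩ := exists_lt_of_lt_csSup ⟨y, hy⟩ hz.2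
    exact hS y hy z hz.1 hzy.le
  calc μ S ≤ μ (Ioc 0 s) := measure_mono hSs
    _ ≤ c * ENNReal.ofReal s := hμ s hs
    _ = c * volume (Ioo 0 s) := by rw [Real.volume_Ioo, sub_zero]
    _ ≤ c * volume S := by gcongr

lemma lintegral_Ioc_le_mul_volume_of_antitoneOn
    (hμ : ∀ y, 0 < y → μ (Ioc 0 y) ≤ c * ENNReal.ofReal y) (hc : c ≠ ∞) {f : ℝ → ℝ}
    (hf : AntitoneOn f (Ioi 0)) (hf_meas : Measurable f) (hf_nonneg : ∀ y, 0 < y → 0 ≤ f y)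
    (ε : ℝ) :
    ∫⁻ y in Ioc 0 ε, ENNReal.ofReal (f y) ∂μ ≤ c * ∫⁻ y in Ioc 0 ε, ENNReal.ofReal (f y) := by
  have hnonneg : ∀ ν : Measure ℝ, 0 ≤ᵐ[ν.restrict (Ioc 0 ε)] f := fun ν =>
    (ae_restrict_mem measurableSet_Ioc).mono fun y hy => hf_nonneg y hy.1
  have hlevel : ∀ t, MeasurableSet {y | t < f y} := fun t =>
    measurableSet_lt measurable_const hf_meas
  rw [lintegral_eq_lintegral_meas_lt _ (hnonneg μ) hf_meas.aemeasurable,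
    lintegral_eq_lintegral_meas_lt _ (hnonneg volume) hf_meas.aemeasurable,
    ← lintegral_const_mul' _ _ hc]
  refine lintegral_mono fun t => ?_
  rw [Measure.restrict_apply (hlevel t), Measure.restrict_apply (hlevel t)]
  refine measure_le_mul_volume_of_downwardClosed hμ inter_subset_right ?_
  rintro y ⟨hty, hy0, hyε⟩ z hz hzy
  exact ⟨hty.trans_le (hf hz (hz.trans_le hzy) hzy), hz, hzy.trans hyε⟩

end ComparisonWithLebesgue

lemma lintegral_Ioc_div_sq_add_sq_volume {a : ℝ} (ha : 0 < a) {ε : ℝ} (hε : 0 ≤ ε) :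
    ∫⁻ y in Ioc 0 ε, ENNReal.ofReal (a / (a ^ 2 + y ^ 2))
      = ENNReal.ofReal (Real.arctan (ε / a)) := by
  have hcont : Continuous fun y : ℝ => a / (a ^ 2 + y ^ 2) :=
    continuous_const.div (by fun_prop) fun y => by positivity
  rw [← ofReal_integral_eq_lintegral_ofReal
      (hcont.integrableOn_Icc.mono_set Ioc_subset_Icc_self) (ae_of_all _ fun y => by positivity),
    ← intervalIntegral.integral_of_le hε, integral_div_sq_add_sq, zero_div, Real.arctan_zero,
    sub_zero]

lemma lintegral_Ioc_div_sq_add_sq_le {μ : Measure ℝ} {c : ℝ≥0∞}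
    (hμ : ∀ y, 0 < y → μ (Ioc 0 y) ≤ c * ENNReal.ofReal y) (hc : c ≠ ∞) {a : ℝ} (ha : 0 ≤ a)
    {ε : ℝ} (hε : 0 ≤ ε) :
    ∫⁻ y in Ioc 0 ε, ENNReal.ofReal (a / (a ^ 2 + y ^ 2)) ∂μ
      ≤ c * ENNReal.ofReal (Real.arctan (ε / a)) := by
  rcases ha.eq_or_lt with rfl | ha
  · simp
  rw [← lintegral_Ioc_div_sq_add_sq_volume ha hε]
  refine lintegral_Ioc_le_mul_volume_of_antitoneOn hμ hc ?_ (by fun_prop)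
    (fun y _ => by positivity) ε
  intro y (hy : 0 < y) z _ hyz
  exact div_le_div_of_nonneg_left ha.le (by positivity) (by gcongr)

section PoissonKernel

variable {μ : Measure ℝ} {C : ℝ} (hμ : ∀ y, 0 < y → μ (Ioc 0 y) ≤ ENNReal.ofReal (C * y))
include hμ

lemma lintegral_Ioc_poissonKernel_le {ε : ℝ} (hε : 0 ≤ ε) (x : ℝ) :
    ∫⁻ y in Ioc 0 ε, ENNReal.ofReal (π * |x| / (y ^ 2 + π ^ 2 * x ^ 2)) ∂μ
      ≤ ENNReal.ofReal (C * Real.arctan (ε / (π * |x|))) := by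
  have hkernel : ∀ y : ℝ, π * |x| / (y ^ 2 + π ^ 2 * x ^ 2)
      = π * |x| / ((π * |x|) ^ 2 + y ^ 2) := fun y => by rw [mul_pow, sq_abs, add_comm]
  have hμ' : ∀ y, 0 < y → μ (Ioc 0 y) ≤ ENNReal.ofReal C * ENNReal.ofReal y := fun y hy =>
    ENNReal.ofReal_mul' hy.le ▸ hμ y hy
  have hπx : 0 ≤ π * |x| := by positivity
  simp only [hkernel, ENNReal.ofReal_mul' (Real.arctan_nonneg.2 (div_nonneg hε hπx))]
  exact lintegral_Ioc_div_sq_add_sq_le hμ' ENNReal.ofReal_ne_top hπx hε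

lemma abs_integral_Ioc_poissonKernel_le (hC : 0 ≤ C) {ε : ℝ} (hε : 0 ≤ ε) (x : ℝ) :
    |∫ y in Ioc 0 ε, π * x / (y ^ 2 + π ^ 2 * x ^ 2) ∂μ| ≤ C * Real.arctan (ε / (π * |x|)) := by
  have habs_kernel : ∀ y : ℝ, ‖π * x / (y ^ 2 + π ^ 2 * x ^ 2)‖
      = π * |x| / (y ^ 2 + π ^ 2 * x ^ 2) := fun y => by
    rw [Real.norm_eq_abs, abs_div, abs_mul, abs_of_pos Real.pi_pos,
      abs_of_nonneg (a := y ^ 2 + π ^ 2 * x ^ 2) (by positivity)]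
  rw [← Real.norm_eq_abs]
  refine (norm_integral_le_lintegral_norm _).trans ?_
  simp only [habs_kernel]
  exact ENNReal.toReal_le_of_le_ofReal (mul_nonneg hC (Real.arctan_nonneg.2 (by positivity)))
    (lintegral_Ioc_poissonKernel_le hμ hε x)

end PoissonKernel

lemma tendsto_integral_mul_of_bounded_of_tendsto_zero {α ι : Type*} [MeasurableSpace α]
    {μ : Measure α} {l : Filter ι} [l.IsCountablyGenerated] {φ : α → ℝ} (hφ : Integrable φ μ)
    {g : ι → α → ℝ} (hg_meas : ∀ᶠ i in l, AEStronglyMeasurable (g i) μ) {M : ℝ}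
    (hg_bdd : ∀ᶠ i in l, ∀ x, |g i x| ≤ M) (hg_lim : ∀ᵐ x ∂μ, Tendsto (g · x) l (𝓝 0)) :
    Tendsto (fun i => ∫ x, φ x * g i x ∂μ) l (𝓝 0) := by
  rw [← integral_zero α ℝ]
  exact tendsto_integral_filter_of_dominated_convergence (fun x => |φ x| * M)
    (hg_meas.mono fun i hi => hφ.aestronglyMeasurable.mul hi)
    (hg_bdd.mono fun i hi => ae_of_all _ fun x => by
      rw [Real.norm_eq_abs, abs_mul]
      exact mul_le_mul_of_nonneg_left (hi x) (abs_nonneg _))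
    (hφ.abs.mul_const M)
    (hg_lim.mono fun x hx => by simpa using hx.const_mul (φ x))

theorem stmt16_general (P : Measure ℝ) [IsLocallyFiniteMeasure P]
    (C : ℝ) (hC : ∀ y : ℝ, 0 < y → (P (Set.Ioc 0 y)).toReal ≤ C * y) :
    (∀ ε : ℝ, 0 < ε → ∀ x : ℝ,
      ∫⁻ y in Set.Ioc 0 ε, ENNReal.ofReal (π * |x| / (y ^ 2 + π ^ 2 * x ^ 2)) ∂P
        ≤ ENNReal.ofReal (C * Real.arctan (ε / (π * |x|)))) ∧
    (∀ φ : ℝ → ℝ, Integrable φ →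
      Tendsto (fun ε : ℝ =>
          ∫ x : ℝ, φ x * ∫ y in Set.Ioc 0 ε, π * x / (y ^ 2 + π ^ 2 * x ^ 2) ∂P)
        (𝓝[>] 0) (𝓝 0)) := by
  have hC0 : 0 ≤ C := by simpa using ENNReal.toReal_nonneg.trans (hC 1 one_pos)
  have hμ : ∀ y, 0 < y → P (Ioc 0 y) ≤ ENNReal.ofReal (C * y) := fun y hy =>
    (ENNReal.le_ofReal_iff_toReal_le measure_Ioc_lt_top.ne (by positivity)).2 (hC y hy)
  refine ⟨fun ε hε => lintegral_Ioc_poissonKernel_le hμ hε.le,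
    fun φ hφ => tendsto_integral_mul_of_bounded_of_tendsto_zero hφ (M := C * (π / 2))
      (Eventually.of_forall fun ε => ?_) ?_ (ae_of_all _ fun x => ?_)⟩
  · exact (StronglyMeasurable.integral_prod_right' (ν := P.restrict (Ioc 0 ε))
      (f := fun p : ℝ × ℝ => π * p.1 / (p.2 ^ 2 + π ^ 2 * p.1 ^ 2))
      (by fun_prop)).aestronglyMeasurable
  · filter_upwards [self_mem_nhdsWithin] with ε hε x
    exact (abs_integral_Ioc_poissonKernel_le hμ hC0 (le_of_lt hε) x).trans
      (mul_le_mul_of_nonneg_left (Real.arctan_lt_pi_div_two _).le hC0)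
  · have hcont : Continuous fun ε : ℝ => C * Real.arctan (ε / (π * |x|)) := by fun_prop
    refine squeeze_zero_norm' ?_ (by simpa using (hcont.tendsto 0).mono_left nhdsWithin_le_nhds)
    filter_upwards [self_mem_nhdsWithin] with ε hε
    exact abs_integral_Ioc_poissonKernel_le hμ hC0 (le_of_lt hε) x

/-- if `Π((0,y]) ≤ Cy` then
`∫_{(0,ε]} π|x|/(y²+π²x²) Π(dy) ≤ C arctan(ε/(π|x|))`, and consequently for every
`φ ∈ L¹(ℝ)` the integrals `∫ φ(x) ∫_{(0,ε]} πx/(y²+π²x²) Π(dy) dx` tend to 0 as ε → 0⁺. -/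
theorem stmt16 (P : Measure ℝ) [IsLocallyFiniteMeasure P] (hP : P (Set.Ioi (0:ℝ))ᶜ = 0)
    (C : ℝ) (hC : ∀ y : ℝ, 0 < y → (P (Set.Ioc 0 y)).toReal ≤ C * y) :
    (∀ ε : ℝ, 0 < ε → ∀ x : ℝ,
      ∫⁻ y in Set.Ioc 0 ε, ENNReal.ofReal (π * |x| / (y ^ 2 + π ^ 2 * x ^ 2)) ∂P
        ≤ ENNReal.ofReal (C * Real.arctan (ε / (π * |x|)))) ∧
    (∀ φ : ℝ → ℝ, Integrable φ →
      Tendsto (fun ε : ℝ =>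
          ∫ x : ℝ, φ x * ∫ y in Set.Ioc 0 ε, π * x / (y ^ 2 + π ^ 2 * x ^ 2) ∂P)
        (𝓝[>] 0) (𝓝 0)) :=
  stmt16_general P C hC
end

section
/- Let Π be a Radon measure on (0,∞) with sup_{y>0} Π((0,y])/y < ∞, and let ℒ_Π(ξ) = ∫_{(0,∞)} e^{−4πy|ξ|} Π(dy) for ξ ≠ 0 (and ℒ_Π(0)=0). Then there exists W^Π ∈ L^∞(ℝ) such that for every u ∈ L¹(ℝ) ∩ L^∞(ℝ) with ∫_ℝ |û(ξ)| ℒ_Π(ξ) dξ < ∞, one has ∫_ℝ u(x) conj(W^Π(x)) dx = ∫_ℝ û(ξ) sgn(ξ) ℒ_Π(ξ) dξ. -/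
open MeasureTheory Set Complex
open scoped Real ENNReal

/-- The Fourier transform `û(ξ) = ∫ u(x) e^{-2πixξ} dx`. -/
noncomputable def fourierT (u : ℝ → ℂ) (ξ : ℝ) : ℂ :=
  ∫ x : ℝ, u x * Complex.exp (-2 * π * x * ξ * Complex.I)

/-- `ℒ_Π(ξ) = ∫ e^{-4πy|ξ|} Π(dy)` for `ξ ≠ 0`, and `ℒ_Π(0) = 0`. -/
noncomputable def LPi (P : Measure ℝ) (ξ : ℝ) : ℝ :=
  if ξ = 0 then 0 else (∫⁻ y, ENNReal.ofReal (Real.exp (-4 * π * y * |ξ|)) ∂P).toReal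

/-! For `y > 0`, `ξ ↦ sgn ξ · e^{-4πy|ξ|}` is the Fourier transform of `-i Q_y` with
`Q_y(x) = x / (π (x² + 4y²))`, so `W^Π = i ∫ Q_y Π(dy)` works by self-adjointness of the Fourier
transform and Fubini, once in `(x, y)` and once in `(ξ, y)`. Both applications of Fubini and the
bound on `W^Π` rest on one estimate: if `f ≥ 0` is antitone on `(0, ∞)`, the Carleson condition
`Π((0, r]) ≤ C r` gives `∫ f dΠ ≤ C ∫₀^∞ f(y) dy` (layer cake), and `∫₀^∞ |Q_y(x)| dy ≤ 1/4`. -/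

open ComplexConjugate

lemma Real.measurable_sign : Measurable Real.sign :=
  Measurable.ite measurableSet_Iio measurable_const
    (Measurable.ite measurableSet_Ioi measurable_const measurable_const)

lemma Real.abs_sign_le_one (r : ℝ) : |Real.sign r| ≤ 1 := by
  rcases Real.sign_apply_eq r with h | h | h <;> simp [h]

lemma Real.abs_sign_of_ne_zero {r : ℝ} (hr : r ≠ 0) : |Real.sign r| = 1 := by
  rcases Real.sign_apply_eq_of_ne_zero r hr with h | h <;> simp [h]

lemma integrable_exp_neg_mul_abs {a : ℝ} (ha : 0 < a) :
    Integrable fun ξ : ℝ => Real.exp (-a * |ξ|) := by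
  rw [← integrableOn_univ, ← Iic_union_Ioi (a := (0 : ℝ))]
  refine IntegrableOn.union ?_ ?_
  · refine (integrableOn_exp_mul_Iic ha 0).congr_fun (fun ξ hξ => ?_) measurableSet_Iic
    rw [abs_of_nonpos hξ, neg_mul_neg]
  · refine (exp_neg_integrableOn_Ioi 0 ha).congr_fun (fun ξ hξ => ?_) measurableSet_Ioi
    rw [abs_of_pos hξ]

lemma fourierT_eq_fourierIntegral (u : ℝ → ℂ) :
    fourierT u = VectorFourier.fourierIntegral Real.fourierChar volume (LinearMap.mul ℝ ℝ) u := by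
  ext ξ
  simp only [fourierT, Real.vector_fourierIntegral_eq_integral_exp_smul, LinearMap.mul_apply',
    smul_eq_mul, mul_comm (u _)]
  congr 1 with x
  push_cast
  ring_nf

lemma integral_fourierT_mul {u g : ℝ → ℂ} (hu : Integrable u) (hg : Integrable g) :
    ∫ ξ, fourierT u ξ * g ξ = ∫ x, u x * fourierT g x := by
  have hflip : (LinearMap.mul ℝ ℝ).flip = LinearMap.mul ℝ ℝ := by ext; simp
  simpa [fourierT_eq_fourierIntegral, hflip]
    using VectorFourier.integral_fourierIntegral_smul_eq_flip (L := LinearMap.mul ℝ ℝ)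
      Real.continuous_fourierChar continuous_mul hu hg

lemma continuous_fourierT {u : ℝ → ℂ} (hu : Integrable u) : Continuous (fourierT u) := by
  rw [fourierT_eq_fourierIntegral]
  exact VectorFourier.fourierIntegral_continuous Real.continuous_fourierChar continuous_mul hu

lemma integrable_sign_mul_exp_neg_mul_abs {a : ℝ} (ha : 0 < a) :
    Integrable fun ξ : ℝ => (Real.sign ξ : ℂ) * Real.exp (-a * |ξ|) := by
  refine (integrable_exp_neg_mul_abs ha).ofReal.bdd_mul (c := 1)
    (Complex.measurable_ofReal.comp Real.measurable_sign).aestronglyMeasurable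
    (ae_of_all _ fun ξ => ?_)
  rw [Complex.norm_real, Real.norm_eq_abs]
  exact Real.abs_sign_le_one ξ

lemma fourierT_sign_mul_exp_neg_mul_abs {a : ℝ} (ha : 0 < a) (x : ℝ) :
    fourierT (fun ξ => (Real.sign ξ : ℂ) * Real.exp (-a * |ξ|)) x
      = (a + 2 * π * x * I)⁻¹ - (a - 2 * π * x * I)⁻¹ := by
  set c₁ : ℂ := -(a + 2 * π * x * I)
  set c₂ : ℂ := a - 2 * π * x * I
  have hc₁ : c₁.re < 0 := by simpa [c₁] using ha
  have hc₂ : 0 < c₂.re := by simpa [c₂] using ha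
  have hpos : EqOn (fun ξ : ℝ => (Real.sign ξ : ℂ) * Real.exp (-a * |ξ|)
      * cexp (-2 * π * ξ * x * I)) (fun ξ => cexp (c₁ * ξ)) (Ioi 0) := fun ξ hξ => by
    simp only [Real.sign_of_pos hξ, abs_of_pos (mem_Ioi.1 hξ), ofReal_exp, c₁]
    push_cast
    rw [one_mul, ← Complex.exp_add]
    ring_nf
  have hneg : EqOn (fun ξ : ℝ => (Real.sign ξ : ℂ) * Real.exp (-a * |ξ|)
      * cexp (-2 * π * ξ * x * I)) (fun ξ => -cexp (c₂ * ξ)) (Iio 0) := fun ξ hξ => by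
    simp only [Real.sign_of_neg hξ, abs_of_neg (mem_Iio.1 hξ), ofReal_exp, c₂]
    push_cast
    rw [neg_one_mul, neg_mul, ← Complex.exp_add]
    ring_nf
  have hint : Integrable fun ξ : ℝ => (Real.sign ξ : ℂ) * Real.exp (-a * |ξ|)
      * cexp (-2 * π * ξ * x * I) := by
    refine (integrable_sign_mul_exp_neg_mul_abs ha).mul_bdd (c := 1)
      (by fun_prop) (ae_of_all _ fun ξ => ?_)
    rw [Complex.norm_exp]
    simp
  rw [fourierT, ← intervalIntegral.integral_Iic_add_Ioi hint.integrableOn hint.integrableOn,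
    integral_Iic_eq_integral_Iio, setIntegral_congr_fun measurableSet_Iio hneg,
    setIntegral_congr_fun measurableSet_Ioi hpos, integral_neg, ← integral_Iic_eq_integral_Iio,
    integral_exp_mul_complex_Iic hc₂, integral_exp_mul_complex_Ioi hc₁]
  simp only [ofReal_zero, mul_zero, Complex.exp_zero, c₁, c₂, div_neg, neg_div, neg_neg, one_div]
  ring

/-- The paper's conjugate Poisson kernel `Q_{iy'}(x) = πx / (y'² + π²x²)` at `y' = 2πy`. -/
noncomputable def conjPoisson (y x : ℝ) : ℝ := x / (π * (x ^ 2 + 4 * y ^ 2))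

lemma integrable_sign_mul_exp_neg_abs {y : ℝ} (hy : 0 < y) :
    Integrable fun ξ : ℝ => (Real.sign ξ : ℂ) * Real.exp (-4 * π * y * |ξ|) := by
  simpa only [neg_mul] using integrable_sign_mul_exp_neg_mul_abs (a := 4 * π * y) (by positivity)

lemma fourierT_sign_mul_exp_neg_abs {y : ℝ} (hy : 0 < y) (x : ℝ) :
    fourierT (fun ξ => (Real.sign ξ : ℂ) * Real.exp (-4 * π * y * |ξ|)) x
      = -I * conjPoisson y x := by
  have h := fourierT_sign_mul_exp_neg_mul_abs (a := 4 * π * y) (by positivity) x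
  simp only [neg_mul] at h ⊢
  have hd : (π * (x ^ 2 + 4 * y ^ 2) : ℂ) ≠ 0 := by
    exact_mod_cast (by positivity : π * (x ^ 2 + 4 * y ^ 2) ≠ 0)
  have hprod : (4 * π * y + 2 * π * x * I : ℂ) * (4 * π * y - 2 * π * x * I)
      = 4 * π * (π * (x ^ 2 + 4 * y ^ 2)) := by
    ring_nf; rw [Complex.I_sq]; ring
  have hprod0 : (4 * π * y + 2 * π * x * I : ℂ) * (4 * π * y - 2 * π * x * I) ≠ 0 := by
    rw [hprod]; exact mul_ne_zero (by simp [Real.pi_ne_zero]) hd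
  rw [h, conjPoisson]
  push_cast
  rw [inv_sub_inv (left_ne_zero_of_mul hprod0) (right_ne_zero_of_mul hprod0), hprod]
  field_simp
  ring

lemma integral_mul_conjPoisson {u : ℝ → ℂ} (hu : Integrable u) {y : ℝ} (hy : 0 < y) :
    ∫ x, u x * (-I * conjPoisson y x)
      = ∫ ξ, fourierT u ξ * ((Real.sign ξ : ℂ) * Real.exp (-4 * π * y * |ξ|)) := by
  simp_rw [← fourierT_sign_mul_exp_neg_abs hy]
  exact (integral_fourierT_mul hu (integrable_sign_mul_exp_neg_abs hy)).symm

lemma abs_conjPoisson (y x : ℝ) : |conjPoisson y x| = |x| / (π * (x ^ 2 + 4 * y ^ 2)) := by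
  rw [conjPoisson, abs_div, abs_of_nonneg (by positivity : 0 ≤ π * (x ^ 2 + 4 * y ^ 2))]

lemma measurable_conjPoisson : Measurable fun p : ℝ × ℝ => conjPoisson p.2 p.1 := by
  unfold conjPoisson; fun_prop

lemma antitoneOn_abs_conjPoisson (x : ℝ) : AntitoneOn (fun y => |conjPoisson y x|) (Ioi 0) :=
  fun z hz y _ hzy => by
    have hz : 0 < z := hz
    simp only [abs_conjPoisson]
    gcongr

lemma abs_conjPoisson_of_ne_zero (y : ℝ) {x : ℝ} (hx : x ≠ 0) :
    |conjPoisson y x| = (π * |x|)⁻¹ * (1 + (2 / |x| * y) ^ 2)⁻¹ := by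
  have hx' : 0 < |x| := abs_pos.2 hx
  rw [abs_conjPoisson, ← sq_abs x]
  field_simp
  ring

lemma integrableOn_abs_conjPoisson (x : ℝ) :
    IntegrableOn (fun y => |conjPoisson y x|) (Ioi 0) := by
  rcases eq_or_ne x 0 with rfl | hx
  · simp [conjPoisson]
  simp_rw [abs_conjPoisson_of_ne_zero _ hx]
  refine Integrable.const_mul ?_ _
  exact (integrableOn_Ioi_comp_mul_left_iff (fun s => (1 + s ^ 2)⁻¹) 0
    (by positivity : 0 < 2 / |x|)).2 integrable_inv_one_add_sq.integrableOn

lemma integral_Ioi_abs_conjPoisson_le (x : ℝ) : ∫ y in Ioi 0, |conjPoisson y x| ≤ 1 / 4 := by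
  rcases eq_or_ne x 0 with rfl | hx
  · simp [conjPoisson]
  have hx' : 0 < |x| := abs_pos.2 hx
  simp_rw [abs_conjPoisson_of_ne_zero _ hx]
  rw [integral_const_mul, integral_comp_mul_left_Ioi (fun s => (1 + s ^ 2)⁻¹) 0 (by positivity),
    mul_zero, integral_Ioi_inv_one_add_sq, Real.arctan_zero, sub_zero, smul_eq_mul]
  field_simp
  norm_num

lemma LPi_eq_integral (P : Measure ℝ) {ξ : ℝ} (hξ : ξ ≠ 0) :
    LPi P ξ = ∫ y, Real.exp (-4 * π * y * |ξ|) ∂P := by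
  rw [LPi, if_neg hξ, integral_eq_lintegral_of_nonneg_ae
    (ae_of_all _ fun y => (Real.exp_pos _).le) (by fun_prop)]

noncomputable def WPi (P : Measure ℝ) (x : ℝ) : ℂ := I * ∫ y, conjPoisson y x ∂P

lemma measurable_WPi (P : Measure ℝ) [SFinite P] : Measurable (WPi P) :=
  measurable_const.mul (Complex.measurable_ofReal.comp
    measurable_conjPoisson.stronglyMeasurable.integral_prod_right'.measurable)

section CarlesonMeasure

variable {P : Measure ℝ} {C : ℝ}

lemma measure_le_ofReal_mul_volume_of_downward_closed (hC : 0 < C)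
    (hCP : ∀ r, 0 < r → P (Ioc 0 r) ≤ ENNReal.ofReal (C * r)) {S : Set ℝ}
    (hS : S ⊆ Ioi 0) (hdown : ∀ y ∈ S, ∀ z, 0 < z → z ≤ y → z ∈ S) :
    P S ≤ ENNReal.ofReal C * volume S := by
  rcases S.eq_empty_or_nonempty with rfl | hne
  · simp
  by_cases hbdd : BddAbove S
  · obtain ⟨y₀, hy₀⟩ := hne
    have hr : 0 < sSup S := (hS hy₀).trans_le (le_csSup hbdd hy₀)
    have hsub : S ⊆ Ioc 0 (sSup S) := fun z hz => ⟨hS hz, le_csSup hbdd hz⟩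
    have hsup : Ioo 0 (sSup S) ⊆ S := fun z hz => by
      obtain ⟨w, hw, hzw⟩ := exists_lt_of_lt_csSup ⟨y₀, hy₀⟩ hz.2
      exact hdown w hw z hz.1 hzw.le
    calc P S ≤ P (Ioc 0 (sSup S)) := measure_mono hsub
      _ ≤ ENNReal.ofReal (C * sSup S) := hCP _ hr
      _ = ENNReal.ofReal C * volume (Ioo 0 (sSup S)) := by
        rw [ENNReal.ofReal_mul hC.le, Real.volume_Ioo, sub_zero]
      _ ≤ ENNReal.ofReal C * volume S := by gcongr
  · have hsup : Ioi 0 ⊆ S := fun z hz => by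
      obtain ⟨w, hw, hzw⟩ := not_bddAbove_iff.1 hbdd z
      exact hdown w hw z hz hzw.le
    have hvol : volume S = ⊤ := top_le_iff.1 (Real.volume_Ioi ▸ measure_mono hsup)
    rw [hvol, ENNReal.mul_top (by simpa using hC)]
    exact le_top

variable (hC : 0 < C) (hCP : ∀ r, 0 < r → P (Ioc 0 r) ≤ ENNReal.ofReal (C * r))
  (hP : P (Ioi 0)ᶜ = 0)
include hC hCP hP

lemma lintegral_le_ofReal_mul_lintegral_Ioi_of_antitoneOn {f : ℝ → ℝ} (hf : Measurable f)
    (hnn : ∀ y, 0 ≤ f y) (hanti : AntitoneOn f (Ioi 0)) :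
    ∫⁻ y, ENNReal.ofReal (f y) ∂P ≤ ENNReal.ofReal C * ∫⁻ y in Ioi 0, ENNReal.ofReal (f y) := by
  -- layer cake: the superlevel sets of `f` are initial segments of `(0, ∞)`
  rw [← Measure.restrict_eq_self_of_ae_mem (ae_iff.2 hP),
    lintegral_eq_lintegral_meas_lt _ (ae_of_all _ hnn) hf.aemeasurable,
    lintegral_eq_lintegral_meas_lt _ (ae_of_all _ hnn) hf.aemeasurable,
    ← lintegral_const_mul' _ _ ENNReal.ofReal_ne_top]
  refine lintegral_mono fun t => ?_
  rw [Measure.restrict_apply (measurableSet_lt measurable_const hf),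
    Measure.restrict_apply (measurableSet_lt measurable_const hf)]
  refine measure_le_ofReal_mul_volume_of_downward_closed hC hCP inter_subset_right ?_
  exact fun y hy z hz hzy => ⟨hy.1.trans_le (hanti hz hy.2 hzy), hz⟩

lemma integrable_of_antitoneOn {f : ℝ → ℝ} (hf : Measurable f) (hnn : ∀ y, 0 ≤ f y)
    (hanti : AntitoneOn f (Ioi 0)) (hint : IntegrableOn f (Ioi 0)) : Integrable f P := by
  refine ⟨hf.aestronglyMeasurable, ?_⟩
  simp only [HasFiniteIntegral, ← ofReal_norm, Real.norm_of_nonneg (hnn _)]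
  exact (lintegral_le_ofReal_mul_lintegral_Ioi_of_antitoneOn hC hCP hP hf hnn hanti).trans_lt
    (ENNReal.mul_lt_top ENNReal.ofReal_lt_top hint.lintegral_lt_top)

lemma integral_le_mul_integral_Ioi_of_antitoneOn {f : ℝ → ℝ} (hf : Measurable f)
    (hnn : ∀ y, 0 ≤ f y) (hanti : AntitoneOn f (Ioi 0)) (hint : IntegrableOn f (Ioi 0)) :
    ∫ y, f y ∂P ≤ C * ∫ y in Ioi 0, f y := by
  rw [integral_eq_lintegral_of_nonneg_ae (ae_of_all _ hnn) hf.aestronglyMeasurable,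
    integral_eq_lintegral_of_nonneg_ae (ae_of_all _ hnn) hf.aestronglyMeasurable,
    ← ENNReal.toReal_ofReal hC.le, ← ENNReal.toReal_mul]
  exact ENNReal.toReal_mono (ENNReal.mul_ne_top ENNReal.ofReal_ne_top hint.lintegral_lt_top.ne)
    (lintegral_le_ofReal_mul_lintegral_Ioi_of_antitoneOn hC hCP hP hf hnn hanti)

lemma integrable_exp_mul_abs_of_ne_zero {ξ : ℝ} (hξ : ξ ≠ 0) :
    Integrable (fun y => Real.exp (-4 * π * y * |ξ|)) P := by
  have ha : 0 < 4 * π * |ξ| := by positivity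
  refine integrable_of_antitoneOn hC hCP hP (by fun_prop) (fun y => (Real.exp_pos _).le)
    (fun z _ y _ hzy => Real.exp_le_exp.2 (by nlinarith)) ?_
  simpa only [neg_mul, mul_right_comm _ _ |ξ|] using exp_neg_integrableOn_Ioi 0 ha

lemma integrable_conjPoisson (x : ℝ) : Integrable (fun y => conjPoisson y x) P := by
  have hm : Measurable fun y => conjPoisson y x := by unfold conjPoisson; fun_prop
  refine (integrable_norm_iff hm.aestronglyMeasurable).1 ?_
  exact integrable_of_antitoneOn hC hCP hP hm.abs (fun _ => abs_nonneg _)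
    (antitoneOn_abs_conjPoisson x) (integrableOn_abs_conjPoisson x)

lemma integral_abs_conjPoisson_le (x : ℝ) : ∫ y, |conjPoisson y x| ∂P ≤ C / 4 := by
  have hm : Measurable fun y => conjPoisson y x := by unfold conjPoisson; fun_prop
  calc ∫ y, |conjPoisson y x| ∂P ≤ C * ∫ y in Ioi 0, |conjPoisson y x| :=
        integral_le_mul_integral_Ioi_of_antitoneOn hC hCP hP hm.abs (fun _ => abs_nonneg _)
          (antitoneOn_abs_conjPoisson x) (integrableOn_abs_conjPoisson x)
    _ ≤ C * (1 / 4) := by gcongr; exact integral_Ioi_abs_conjPoisson_le x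
    _ = C / 4 := by ring

lemma norm_WPi_le (x : ℝ) : ‖WPi P x‖ ≤ C / 4 := by
  rw [WPi, norm_mul, Complex.norm_I, one_mul, Complex.norm_real, Real.norm_eq_abs]
  exact (abs_integral_le_integral_abs).trans (integral_abs_conjPoisson_le hC hCP hP x)

lemma integral_mul_conj_WPi [SFinite P] {u : ℝ → ℂ} (hu : Integrable u) :
    ∫ x, u x * conj (WPi P x) = ∫ y, (∫ x, u x * (-I * conjPoisson y x)) ∂P := by
  have hm : AEStronglyMeasurable (fun p : ℝ × ℝ => u p.1 * (-I * conjPoisson p.2 p.1))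
      (volume.prod P) :=
    hu.1.comp_fst.mul (measurable_const.mul
      (Complex.measurable_ofReal.comp measurable_conjPoisson)).aestronglyMeasurable
  have hint :
      Integrable (fun p : ℝ × ℝ => u p.1 * (-I * conjPoisson p.2 p.1)) (volume.prod P) := by
    refine (integrable_prod_iff hm).2 ⟨ae_of_all _ fun x =>
      ((integrable_conjPoisson hC hCP hP x).ofReal.const_mul (-I)).const_mul (u x), ?_⟩
    refine (hu.norm.mul_const (C / 4)).mono' hm.norm.integral_prod_right' (ae_of_all _ fun x => ?_)
    simp only [norm_mul, norm_neg, Complex.norm_I, one_mul, Complex.norm_real, Real.norm_eq_abs,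
      integral_const_mul, abs_norm]
    rw [abs_of_nonneg (integral_nonneg fun _ => abs_nonneg _)]
    gcongr
    exact integral_abs_conjPoisson_le hC hCP hP x
  rw [← integral_integral_swap (f := fun x y => u x * (-I * conjPoisson y x)) hint]
  congr 1 with x
  simp only [WPi, map_mul, Complex.conj_I, Complex.conj_ofReal, integral_const_mul,
    integral_complex_ofReal]

lemma integral_integral_mul_sign_mul_exp [SFinite P] {f : ℝ → ℂ} (hf : AEStronglyMeasurable f)
    (hfL : Integrable fun ξ => ‖f ξ‖ * LPi P ξ) :
    ∫ y, (∫ ξ, f ξ * ((Real.sign ξ : ℂ) * Real.exp (-4 * π * y * |ξ|))) ∂P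
      = ∫ ξ, f ξ * Real.sign ξ * LPi P ξ := by
  have hne : ∀ᵐ ξ : ℝ, ξ ≠ 0 := compl_mem_ae_iff.2 (measure_singleton 0)
  have hm : AEStronglyMeasurable
      (fun p : ℝ × ℝ => f p.1 * ((Real.sign p.1 : ℂ) * Real.exp (-4 * π * p.2 * |p.1|)))
      (volume.prod P) :=
    hf.comp_fst.mul ((Complex.measurable_ofReal.comp
      (Real.measurable_sign.comp measurable_fst)).aestronglyMeasurable.mul (by fun_prop))
  have hint : Integrable
      (fun p : ℝ × ℝ => f p.1 * ((Real.sign p.1 : ℂ) * Real.exp (-4 * π * p.2 * |p.1|)))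
      (volume.prod P) := by
    refine (integrable_prod_iff hm).2 ⟨?_, hfL.congr ?_⟩
    · filter_upwards [hne] with ξ hξ
      exact ((integrable_exp_mul_abs_of_ne_zero hC hCP hP hξ).ofReal.const_mul _).const_mul _
    · filter_upwards [hne] with ξ hξ
      simp only [norm_mul, Complex.norm_real, Real.norm_eq_abs, Real.abs_sign_of_ne_zero hξ,
        Real.abs_exp, one_mul, integral_const_mul, LPi_eq_integral P hξ]
  rw [← integral_integral_swap
    (f := fun ξ y => f ξ * ((Real.sign ξ : ℂ) * Real.exp (-4 * π * y * |ξ|))) hint]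
  refine integral_congr_ae ?_
  filter_upwards [hne] with ξ hξ
  simp only [integral_const_mul, integral_complex_ofReal, LPi_eq_integral P hξ, mul_assoc]

end CarlesonMeasure

/-- there is `W^Π ∈ L^∞(ℝ)` with (distributional) Fourier transform
`sgn(ξ) ℒ_Π(ξ)`: for all `u ∈ L¹ ∩ L^∞` with `∫ |û| ℒ_Π < ∞`,
`∫ u conj(W^Π) = ∫ û(ξ) sgn(ξ) ℒ_Π(ξ) dξ`. -/
theorem stmt17 (P : Measure ℝ) [IsLocallyFiniteMeasure P] (hP : P (Set.Ioi (0:ℝ))ᶜ = 0)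
    (hCarl : ∃ C : ℝ, ∀ y : ℝ, 0 < y → (P (Set.Ioc 0 y)).toReal ≤ C * y) :
    ∃ (W : ℝ → ℂ) (B : ℝ), Measurable W ∧ (∀ x : ℝ, ‖W x‖ ≤ B) ∧
      ∀ u : ℝ → ℂ, Integrable u → (∃ M : ℝ, ∀ x : ℝ, ‖u x‖ ≤ M) →
        Integrable (fun ξ => ‖fourierT u ξ‖ * LPi P ξ) →
        ∫ x : ℝ, u x * (starRingEnd ℂ) (W x)
          = ∫ ξ : ℝ, fourierT u ξ * (Real.sign ξ : ℂ) * (LPi P ξ : ℂ) := by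
  obtain ⟨C₀, hC₀⟩ := hCarl
  have hC : 0 < max C₀ 1 := lt_max_of_lt_right one_pos
  have hCP : ∀ r, 0 < r → P (Ioc 0 r) ≤ ENNReal.ofReal (max C₀ 1 * r) := fun r hr => by
    rw [← ENNReal.ofReal_toReal measure_Ioc_lt_top.ne]
    exact ENNReal.ofReal_le_ofReal ((hC₀ r hr).trans (by gcongr; exact le_max_left _ _))
  refine ⟨WPi P, max C₀ 1 / 4, measurable_WPi P, norm_WPi_le hC hCP hP, fun u hu _ hûL => ?_⟩
  calc ∫ x, u x * conj (WPi P x) = ∫ y, (∫ x, u x * (-I * conjPoisson y x)) ∂P :=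
        integral_mul_conj_WPi hC hCP hP hu
    _ = ∫ y, (∫ ξ, fourierT u ξ * ((Real.sign ξ : ℂ) * Real.exp (-4 * π * y * |ξ|))) ∂P :=
        integral_congr_ae ((ae_iff.2 hP).mono fun y hy => integral_mul_conjPoisson hu hy)
    _ = ∫ ξ, fourierT u ξ * Real.sign ξ * LPi P ξ :=
        integral_integral_mul_sign_mul_exp hC hCP hP (continuous_fourierT hu).aestronglyMeasurable
          hûL
end
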